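/- arXiv:1006.2859 — 3 statements merged into one kernel-verified Lean document; each statement's English description precedes it below -/
import Mathlib

section
/- Let Q ⊆ ℝ^d be a compact convex set, M ⊆ Q a finite set, f : Q → ℝ a convex function that is Lipschitz with constant L, f_n : Q → ℝ a function, ε ≥ 0 with |f_n(m) − f(m)| ≤ ε for all m ∈ M, and δ > 0. Suppose x ∈ Q can be written as x = Σ_k λ_k x_k with x_k ∈ M, λ_k ≥ 0, Σ_k λ_k = 1 and |x − x_k| ≤ δ for all k. Then every convex function ψ : Q → ℝ with ψ(m) ≤ f_n(m) for all m ∈ M satisfies ψ(x) ≤ f(x) + ε + Lδ; hence the convex estimator f̂(x) = sup{ψ(x) : ψ convex on Q, ψ ≤ f_n on M} satisfies f̂(x) ≤ f(x) + ε + Lδ. -/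
open Set

/-- The convex estimator associated with a function `g` and a finite set `M ⊆ Q`:
`x ↦ sup {ψ x : ψ convex on Q, ψ ≤ g on M}`. -/
noncomputable def convEst {d : ℕ} (Q : Set (EuclideanSpace ℝ (Fin d)))
    (M : Finset (EuclideanSpace ℝ (Fin d))) (g : EuclideanSpace ℝ (Fin d) → ℝ)
    (x : EuclideanSpace ℝ (Fin d)) : ℝ :=
  sSup {y : ℝ | ∃ ψ : EuclideanSpace ℝ (Fin d) → ℝ,
    ConvexOn ℝ Q ψ ∧ (∀ m ∈ M, ψ m ≤ g m) ∧ y = ψ x}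

/-- second half of the proof of Theorem 1: if `x` is a convex combination of
points of `M` each within distance `δ` of `x`, then every convex `ψ ≤ f_n` on `M`
satisfies `ψ x ≤ f x + ε + L δ`, and hence so does the convex estimator. -/
theorem convEst_upper_bound {d : ℕ} (Q : Set (EuclideanSpace ℝ (Fin d)))
    (hQc : IsCompact Q) (hQconv : Convex ℝ Q)
    (M : Finset (EuclideanSpace ℝ (Fin d)))
    (hMQ : (M : Set (EuclideanSpace ℝ (Fin d))) ⊆ Q)
    (f fn : EuclideanSpace ℝ (Fin d) → ℝ) (hfconv : ConvexOn ℝ Q f)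
    (L : ℝ) (hL : 0 ≤ L)
    (hLip : ∀ y ∈ Q, ∀ z ∈ Q, |f y - f z| ≤ L * dist y z)
    (ε : ℝ) (hε : 0 ≤ ε) (herr : ∀ m ∈ M, |fn m - f m| ≤ ε)
    (δ : ℝ) (hδ : 0 < δ) (x : EuclideanSpace ℝ (Fin d)) (hx : x ∈ Q)
    (hcomb : x ∈ convexHull ℝ {m : EuclideanSpace ℝ (Fin d) | m ∈ M ∧ dist x m ≤ δ}) :
    (∀ ψ : EuclideanSpace ℝ (Fin d) → ℝ, ConvexOn ℝ Q ψ →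
        (∀ m ∈ M, ψ m ≤ fn m) → ψ x ≤ f x + ε + L * δ) ∧
      convEst Q M fn x ≤ f x + ε + L * δ := by
  set S : Set (EuclideanSpace ℝ (Fin d)) :=
    {m : EuclideanSpace ℝ (Fin d) | m ∈ M ∧ dist x m ≤ δ} with hS
  have hSQ : S ⊆ Q := fun m hm => hMQ hm.1
  have hSne : S.Nonempty := by
    by_contra h
    rw [Set.not_nonempty_iff_eq_empty] at h
    rw [h, convexHull_empty] at hcomb
    exact hcomb
  have key : ∀ ψ : EuclideanSpace ℝ (Fin d) → ℝ, ConvexOn ℝ Q ψ →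
      (∀ m ∈ M, ψ m ≤ fn m) → ψ x ≤ f x + ε + L * δ := by
    intro ψ hψconv hψle
    obtain ⟨m, hmS, hle⟩ := hψconv.exists_ge_of_mem_convexHull hSQ hcomb
    have hmQ : m ∈ Q := hSQ hmS
    have h1 : ψ m ≤ fn m := hψle m hmS.1
    have h2 : fn m ≤ f m + ε := by
      have := herr m hmS.1
      linarith [abs_le.1 this |>.2]
    have h3 : f m ≤ f x + L * δ := by
      have := hLip m hmQ x hx
      have hd : dist m x ≤ δ := by rw [dist_comm]; exact hmS.2
      have : f m - f x ≤ L * dist m x := (abs_le.1 this).2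
      nlinarith [mul_le_mul_of_nonneg_left hd hL]
    linarith
  refine ⟨key, ?_⟩
  obtain ⟨m₀, hm₀⟩ := hSne
  have hne : {y : ℝ | ∃ ψ : EuclideanSpace ℝ (Fin d) → ℝ,
      ConvexOn ℝ Q ψ ∧ (∀ m ∈ M, ψ m ≤ fn m) ∧ y = ψ x}.Nonempty := by
    refine ⟨(fun _ => M.inf' ⟨m₀, hm₀.1⟩ fn) x, fun _ => M.inf' ⟨m₀, hm₀.1⟩ fn,
      convexOn_const _ hQconv, fun m hm => Finset.inf'_le fn hm, rfl⟩
  exact csSup_le hne (by rintro y ⟨ψ, hc, hl, rfl⟩; exact key ψ hc hl)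
end

section
/- (Theorem 1, main error bound.) Let Q ⊆ ℝ^d be a compact convex set, M ⊆ Q a finite set, f : Q → ℝ a convex function that is Lipschitz with constant L, f_n : Q → ℝ a function, ε ≥ 0 and δ > 0. Assume (i) |f_n(m) − f(m)| ≤ ε for all m ∈ M, and (ii) every x ∈ Q is a convex combination of points of M each at distance at most δ from x. Then the convex estimator f̂(x) = sup{ψ(x) : ψ convex on Q, ψ ≤ f_n on M} satisfies, for all x ∈ Q, −ε ≤ f̂(x) − f(x) ≤ ε + Lδ. -/
/-!
Every convex minorant `ψ` of `f_n` on `M` is, by the maximum principle for convex functions, bounded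
at `x` by its value at some grid point `m` within distance `δ` of `x`; there
`ψ m ≤ f_n m ≤ f m + ε ≤ f x + ε + L δ`. Conversely `f - ε` is itself a convex minorant of `f_n`
on `M`, so `f x - ε ≤ f̂ x`.
-/

open Set

section ConvEst

variable {d : ℕ} {Q : Set (EuclideanSpace ℝ (Fin d))} {M : Finset (EuclideanSpace ℝ (Fin d))}
  {g ψ : EuclideanSpace ℝ (Fin d) → ℝ} {x : EuclideanSpace ℝ (Fin d)} {b : ℝ}

theorem le_convEst
    (hbound : ∀ φ, ConvexOn ℝ Q φ → (∀ m ∈ M, φ m ≤ g m) → φ x ≤ b)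
    (hψ : ConvexOn ℝ Q ψ) (hψg : ∀ m ∈ M, ψ m ≤ g m) : ψ x ≤ convEst Q M g x :=
  le_csSup ⟨b, by rintro _ ⟨φ, hφ, hφg, rfl⟩; exact hbound φ hφ hφg⟩ ⟨ψ, hψ, hψg, rfl⟩

theorem convEst_le (hψ : ConvexOn ℝ Q ψ) (hψg : ∀ m ∈ M, ψ m ≤ g m)
    (hbound : ∀ φ, ConvexOn ℝ Q φ → (∀ m ∈ M, φ m ≤ g m) → φ x ≤ b) :
    convEst Q M g x ≤ b :=
  csSup_le ⟨_, ψ, hψ, hψg, rfl⟩ (by rintro _ ⟨φ, hφ, hφg, rfl⟩; exact hbound φ hφ hφg)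

end ConvEst

theorem convEst_error_bound_general {d : ℕ} (Q : Set (EuclideanSpace ℝ (Fin d)))
    (M : Finset (EuclideanSpace ℝ (Fin d)))
    (hMQ : (M : Set (EuclideanSpace ℝ (Fin d))) ⊆ Q)
    (f fn : EuclideanSpace ℝ (Fin d) → ℝ) (hfconv : ConvexOn ℝ Q f)
    (L : ℝ) (hL : 0 ≤ L)
    (hLip : ∀ y ∈ Q, ∀ z ∈ Q, |f y - f z| ≤ L * dist y z)
    (ε : ℝ) (δ : ℝ)
    (herr : ∀ m ∈ M, |fn m - f m| ≤ ε)
    (hgrid : ∀ x ∈ Q,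
      x ∈ convexHull ℝ {m : EuclideanSpace ℝ (Fin d) | m ∈ M ∧ dist x m ≤ δ}) :
    ∀ x ∈ Q, -ε ≤ convEst Q M fn x - f x ∧ convEst Q M fn x - f x ≤ ε + L * δ := by
  intro x hx
  have hbound : ∀ ψ, ConvexOn ℝ Q ψ → (∀ m ∈ M, ψ m ≤ fn m) → ψ x ≤ f x + (ε + L * δ) := by
    intro ψ hψ hψfn
    obtain ⟨m, ⟨hmM, hxm⟩, hψm⟩ :=
      hψ.exists_ge_of_mem_convexHull (fun m hm ↦ hMQ hm.1) (hgrid x hx)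
    have hfm : f m - f x ≤ L * δ := calc
      f m - f x ≤ |f m - f x| := le_abs_self _
      _ ≤ L * dist m x := hLip m (hMQ hmM) x hx
      _ ≤ L * δ := by rw [dist_comm]; exact mul_le_mul_of_nonneg_left hxm hL
    linarith [hψfn m hmM, (abs_le.1 (herr m hmM)).2]
  have hminor : ConvexOn ℝ Q (fun z ↦ f z - ε) := hfconv.sub (concaveOn_const ε hfconv.1)
  have hminor_le : ∀ m ∈ M, f m - ε ≤ fn m := fun m hm ↦ by linarith [(abs_le.1 (herr m hm)).1]
  exact ⟨by linarith [le_convEst hbound hminor hminor_le],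
    by linarith [convEst_le hminor hminor_le hbound]⟩

/-- Theorem 1, main error bound: if `|f_n - f| ≤ ε` on `M` and every
`x ∈ Q` is a convex combination of points of `M` within distance `δ` of `x`, then
`-ε ≤ f̂ x - f x ≤ ε + L δ` for all `x ∈ Q`. -/
theorem convEst_error_bound {d : ℕ} (Q : Set (EuclideanSpace ℝ (Fin d)))
    (hQc : IsCompact Q) (hQconv : Convex ℝ Q)
    (M : Finset (EuclideanSpace ℝ (Fin d)))
    (hMQ : (M : Set (EuclideanSpace ℝ (Fin d))) ⊆ Q)
    (f fn : EuclideanSpace ℝ (Fin d) → ℝ) (hfconv : ConvexOn ℝ Q f)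
    (L : ℝ) (hL : 0 ≤ L)
    (hLip : ∀ y ∈ Q, ∀ z ∈ Q, |f y - f z| ≤ L * dist y z)
    (ε : ℝ) (hε : 0 ≤ ε) (δ : ℝ) (hδ : 0 < δ)
    (herr : ∀ m ∈ M, |fn m - f m| ≤ ε)
    (hgrid : ∀ x ∈ Q,
      x ∈ convexHull ℝ {m : EuclideanSpace ℝ (Fin d) | m ∈ M ∧ dist x m ≤ δ}) :
    ∀ x ∈ Q, -ε ≤ convEst Q M fn x - f x ∧ convEst Q M fn x - f x ≤ ε + L * δ :=
  convEst_error_bound_general Q M hMQ f fn hfconv L hL hLip ε δ herr hgrid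
end

section
/- (Corollary 2, sup-norm bound.) Let Q ⊆ ℝ^d be a compact convex set, f : Q → ℝ a convex function that is Lipschitz with constant L, f_n : Q → ℝ a function, δ > 0, and M ⊆ Q a finite set such that every x ∈ Q is a convex combination of points of M each at distance at most δ from x. Then the convex estimator f̂(x) = sup{ψ(x) : ψ convex on Q, ψ ≤ f_n on M} satisfies sup_{x ∈ Q} |f̂(x) − f(x)| ≤ sup_{x ∈ Q} |f_n(x) − f(x)| + Lδ. -/
open Set

/-- Corollary 2, sup-norm bound:
`‖f̂ - f‖_{∞,Q} ≤ ‖f_n - f‖_{∞,Q} + L δ`. -/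
theorem convEst_sup_norm_bound {d : ℕ} (Q : Set (EuclideanSpace ℝ (Fin d)))
    (hQc : IsCompact Q) (hQconv : Convex ℝ Q)
    (f fn : EuclideanSpace ℝ (Fin d) → ℝ) (hfconv : ConvexOn ℝ Q f)
    (L : ℝ) (hL : 0 ≤ L)
    (hLip : ∀ y ∈ Q, ∀ z ∈ Q, |f y - f z| ≤ L * dist y z)
    (hfnbdd : ∃ C : ℝ, ∀ x ∈ Q, |fn x| ≤ C)
    (δ : ℝ) (hδ : 0 < δ)
    (M : Finset (EuclideanSpace ℝ (Fin d)))
    (hMQ : (M : Set (EuclideanSpace ℝ (Fin d))) ⊆ Q)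
    (hgrid : ∀ x ∈ Q,
      x ∈ convexHull ℝ {m : EuclideanSpace ℝ (Fin d) | m ∈ M ∧ dist x m ≤ δ}) :
    sSup ((fun x => |convEst Q M fn x - f x|) '' Q) ≤
      sSup ((fun x => |fn x - f x|) '' Q) + L * δ := by
  rcases Q.eq_empty_or_nonempty with rfl | ⟨x0, hx0⟩
  · simp only [Set.image_empty, Real.sSup_empty]
    positivity
  obtain ⟨C, hC⟩ := hfnbdd
  -- `Q` is bounded
  obtain ⟨r, hr⟩ := hQc.isBounded.subset_closedBall x0
  -- `f` is bounded on `Q`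
  have hfb : ∀ x ∈ Q, |f x| ≤ |f x0| + L * r := by
    intro x hx
    have h1 := hLip x hx x0 hx0
    have h2 : dist x x0 ≤ r := by simpa [Metric.mem_closedBall] using hr hx
    have h3 : L * dist x x0 ≤ L * r := mul_le_mul_of_nonneg_left h2 hL
    calc |f x| = |f x - f x0 + f x0| := by ring_nf
      _ ≤ |f x - f x0| + |f x0| := abs_add_le _ _
      _ ≤ |f x0| + L * r := by linarith
  set E := sSup ((fun x => |fn x - f x|) '' Q) with hE
  have hbddE : BddAbove ((fun x => |fn x - f x|) '' Q) := by
    refine ⟨C + (|f x0| + L * r), ?_⟩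
    rintro y ⟨x, hx, rfl⟩
    have := hC x hx
    have := hfb x hx
    calc |fn x - f x| ≤ |fn x| + |f x| := abs_sub _ _
      _ ≤ C + (|f x0| + L * r) := by linarith
  have hEge : ∀ x ∈ Q, |fn x - f x| ≤ E :=
    fun x hx => le_csSup hbddE ⟨x, hx, rfl⟩
  have hE0 : 0 ≤ E := le_trans (abs_nonneg _) (hEge x0 hx0)
  -- the candidate function `f - E`
  have hψ0 : ConvexOn ℝ Q (f - fun _ => E) :=
    hfconv.sub (concaveOn_const E hQconv)
  have hψ0mem : ∀ x, (f x - E) ∈ {y : ℝ | ∃ ψ : EuclideanSpace ℝ (Fin d) → ℝ,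
      ConvexOn ℝ Q ψ ∧ (∀ m ∈ M, ψ m ≤ fn m) ∧ y = ψ x} := by
    intro x
    refine ⟨f - fun _ => E, hψ0, ?_, rfl⟩
    intro m hm
    have h := neg_le_of_abs_le (hEge m (hMQ hm))
    simp only [Pi.sub_apply]
    linarith
  -- upper bound on each element of the estimator set
  have hub : ∀ x ∈ Q, ∀ y ∈ {y : ℝ | ∃ ψ : EuclideanSpace ℝ (Fin d) → ℝ,
      ConvexOn ℝ Q ψ ∧ (∀ m ∈ M, ψ m ≤ fn m) ∧ y = ψ x},
      y ≤ f x + E + L * δ := by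
    rintro x hx y ⟨ψ, hψ, hψm, rfl⟩
    have hts : {m : EuclideanSpace ℝ (Fin d) | m ∈ M ∧ dist x m ≤ δ} ⊆ Q :=
      fun m hm => hMQ hm.1
    obtain ⟨m, ⟨hmM, hmd⟩, hle⟩ := hψ.exists_ge_of_mem_convexHull hts (hgrid x hx)
    have h1 : ψ m ≤ fn m := hψm m hmM
    have h2 := le_of_abs_le (hEge m (hMQ hmM))
    have h3 : |f m - f x| ≤ L * dist m x := hLip m (hMQ hmM) x hx
    have h4 : L * dist m x ≤ L * δ := by
      rw [dist_comm]; exact mul_le_mul_of_nonneg_left hmd hL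
    have h5 := le_of_abs_le h3
    linarith
  -- pointwise bound
  have hpt : ∀ x ∈ Q, |convEst Q M fn x - f x| ≤ E + L * δ := by
    intro x hx
    have hlow : f x - E ≤ convEst Q M fn x :=
      le_csSup ⟨f x + E + L * δ, fun y hy => hub x hx y hy⟩ (hψ0mem x)
    have hhigh : convEst Q M fn x ≤ f x + E + L * δ :=
      csSup_le ⟨f x - E, hψ0mem x⟩ (hub x hx)
    have hLδ : 0 ≤ L * δ := mul_nonneg hL hδ.le
    rw [abs_le]
    constructor <;> linarith
  refine Real.sSup_le ?_ (by positivity)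
  rintro y ⟨x, hx, rfl⟩
  exact hpt x hx
end
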